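/- Fix integers a, b ≥ 1 and m ≥ 1. Let Y be the multigraph consisting of two vertices u, v joined by m internally disjoint paths of length a and m internally disjoint paths of length b (all interior vertices distinct). Then the number of spanning trees of Y equals (a + b) · m · (ab)^{m−1}. In particular, for the degree-p^n branched cyclic cover of a cycle of length a + b totally ramified at the two distinguished vertices (with trivial voltage assignment), the number of spanning trees of the n-th layer equals (a+b) · p^n · (ab)^{p^n − 1}. -/

import Mathlib

structure Multigraph where
  V : Type
  E : Type
  [fintypeV : Fintype V]
  [fintypeE : Fintype E]
  [decEqV : DecidableEq V]
  ends : E → Sym2 V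

attribute [instance] Multigraph.fintypeV Multigraph.fintypeE Multigraph.decEqV

namespace Multigraph

variable (G : Multigraph)

/-- Reachability in the spanning subgraph using only the edges in `S`. -/
def Reach (S : Set G.E) : G.V → G.V → Prop :=
  Relation.ReflTransGen (fun x y => ∃ e ∈ S, G.ends e = s(x, y))

/-- The multigraph is connected. -/
def Connected : Prop := ∀ x y : G.V, G.Reach Set.univ x y

/-- The edge set `S` is acyclic: every edge of `S` is a bridge of `S`. -/
def IsForest (S : Finset G.E) : Prop :=
  ∀ e ∈ S, ∀ x y : G.V, G.ends e = s(x, y) → ¬ G.Reach ((↑S : Set G.E) \ {e}) x y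

/-- `S` is the edge set of a spanning tree. -/
def IsSpanningTree (S : Finset G.E) : Prop :=
  G.IsForest S ∧ ∀ x y : G.V, G.Reach ↑S x y

/-- `S` is the edge set of a spanning 2-forest consisting of two trees, one
containing `u`, the other containing `v`, whose vertex sets partition the vertices. -/
def IsTwoForest (u v : G.V) (S : Finset G.E) : Prop :=
  G.IsForest S ∧ ¬ G.Reach ↑S u v ∧ ∀ x : G.V, G.Reach ↑S u x ∨ G.Reach ↑S v x

/-- The number of spanning trees. -/
noncomputable def treeCount : ℕ :=
  Nat.card {S : Finset G.E // G.IsSpanningTree S}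

/-- The number of spanning 2-forests separating `u` and `v`. -/
noncomputable def twoForestCount (u v : G.V) : ℕ :=
  Nat.card {S : Finset G.E // G.IsTwoForest u v S}

end Multigraph

/-- The `j`-th node along the `i`-th path of a generalized theta graph. -/
def thetaNode (N : ℕ) (ℓ : Fin N → ℕ) (i : Fin N) (j : ℕ) (hj : j ≤ ℓ i) :
    Bool ⊕ (Σ i : Fin N, Fin (ℓ i - 1)) :=
  if h0 : j = 0 then Sum.inl false
  else if hl : j = ℓ i then Sum.inl true
  else Sum.inr ⟨i, ⟨j - 1, by omega⟩⟩

/-- The generalized theta graph: two vertices `u = Sum.inl false` and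
`v = Sum.inl true` joined by `N` internally disjoint paths, the `i`-th of length
`ℓ i`. -/
def theta (N : ℕ) (ℓ : Fin N → ℕ) : Multigraph where
  V := Bool ⊕ (Σ i : Fin N, Fin (ℓ i - 1))
  E := Σ i : Fin N, Fin (ℓ i)
  ends := fun e =>
    s(thetaNode N ℓ e.1 e.2.1 (Nat.le_of_lt e.2.isLt),
      thetaNode N ℓ e.1 (e.2.1 + 1) e.2.isLt)

/-- The multigraph consisting of two vertices `u`, `v` joined by `m` internally disjoint
paths of length `a` and `m` internally disjoint paths of length `b`. -/
def doubleTheta (a b m : ℕ) : Multigraph :=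
  theta (m + m) (fun i => if i.1 < m then a else b)

/-! A spanning tree of a theta graph (two vertices joined by internally disjoint paths of
positive lengths `ℓ i`) keeps one path whole and omits exactly one edge from every other path:
if every path lost an edge, `u` and `v` would be separated; two missing edges on one path cut
off the segment between them; two whole paths form a cycle. Conversely each such choice is a
spanning tree, so there are `∑ i, ∏ j ≠ i, ℓ j` of them. With `m` paths of length `a` and `m` of
length `b` this is `m a^(m-1) b^m + m a^m b^(m-1) = (a + b) m (ab)^(m-1)`. -/

namespace Multigraph

variable {G : Multigraph} {S : Set G.E} {x y z : G.V}

theorem Reach.trans (h : G.Reach S x y) (h' : G.Reach S y z) : G.Reach S x z :=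
  Relation.ReflTransGen.trans h h'

theorem Reach.symm (h : G.Reach S x y) : G.Reach S y x := by
  induction h with
  | refl => exact Relation.ReflTransGen.refl
  | tail _ hstep ih =>
    obtain ⟨e, he, hends⟩ := hstep
    exact Relation.ReflTransGen.head ⟨e, he, hends.trans Sym2.eq_swap⟩ ih

theorem Reach.iff_of_forall_edge (P : G.V → Prop)
    (hP : ∀ e ∈ S, ∀ x y, G.ends e = s(x, y) → (P x ↔ P y)) (h : G.Reach S x y) :
    P x ↔ P y := by
  induction h with
  | refl => rfl
  | tail _ hstep ih =>
    obtain ⟨e, he, hends⟩ := hstep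
    exact ih.trans (hP e he _ _ hends)

end Multigraph

section thetaNode

variable {N : ℕ} {ℓ : Fin N → ℕ}

theorem thetaNode_zero (i : Fin N) (h : 0 ≤ ℓ i) : thetaNode N ℓ i 0 h = Sum.inl false := rfl

theorem thetaNode_length (i : Fin N) (hi : 0 < ℓ i) (h : ℓ i ≤ ℓ i) :
    thetaNode N ℓ i (ℓ i) h = Sum.inl true := by
  rw [thetaNode, dif_neg hi.ne', dif_pos rfl]

theorem thetaNode_of_pos_of_lt (i : Fin N) {s : ℕ} (h₀ : 0 < s) (hs : s < ℓ i) (h : s ≤ ℓ i) :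
    thetaNode N ℓ i s h = Sum.inr ⟨i, ⟨s - 1, by omega⟩⟩ := by
  rw [thetaNode, dif_neg h₀.ne', dif_neg hs.ne]

end thetaNode

namespace theta

variable {N : ℕ} {ℓ : Fin N → ℕ}

section cuts

variable {S : Set (theta N ℓ).E}

theorem ends_eq (e : (theta N ℓ).E) :
    (theta N ℓ).ends e =
      s(thetaNode N ℓ e.1 e.2 e.2.isLt.le, thetaNode N ℓ e.1 (e.2 + 1) e.2.isLt) := rfl

theorem reach_thetaNode_of_forall_mem {i : Fin N} {s t : ℕ} (hst : s ≤ t) (ht : t ≤ ℓ i)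
    (hS : ∀ j (hj : j < ℓ i), s ≤ j → j < t → (⟨i, ⟨j, hj⟩⟩ : (theta N ℓ).E) ∈ S) :
    (theta N ℓ).Reach S (thetaNode N ℓ i s (hst.trans ht)) (thetaNode N ℓ i t ht) := by
  induction t, hst using Nat.le_induction with
  | base => exact Relation.ReflTransGen.refl
  | succ t hst ih =>
    exact (ih (by omega) fun j hj h₁ h₂ => hS j hj h₁ (by omega)).tail
      ⟨⟨i, ⟨t, by omega⟩⟩, hS t (by omega) hst (by omega), rfl⟩

theorem reach_of_forall_mem {i : Fin N} (hi : 0 < ℓ i)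
    (hS : ∀ t : Fin (ℓ i), (⟨i, t⟩ : (theta N ℓ).E) ∈ S) :
    (theta N ℓ).Reach S (Sum.inl false) (Sum.inl true) := by
  have h := reach_thetaNode_of_forall_mem (S := S) (Nat.zero_le _) le_rfl
    fun j hj _ _ => hS ⟨j, hj⟩
  rwa [thetaNode_zero, thetaNode_length i hi] at h

/-- A predicate on positions `(i, s)`, the `s`-th node of path `i`, read on vertices;
`pu` and `pv` are its values at `u` and `v`. -/
def vertexPred (P : Fin N → ℕ → Prop) (pu pv : Prop) : Bool ⊕ (Σ i : Fin N, Fin (ℓ i - 1)) → Prop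
  | Sum.inl false => pu
  | Sum.inl true => pv
  | Sum.inr ⟨i, t⟩ => P i (t + 1)

theorem vertexPred_thetaNode {P : Fin N → ℕ → Prop} {pu pv : Prop}
    (hu : ∀ i, P i 0 ↔ pu) (hv : ∀ i, P i (ℓ i) ↔ pv) (i : Fin N) (s : ℕ) (hs : s ≤ ℓ i) :
    vertexPred P pu pv (thetaNode N ℓ i s hs) ↔ P i s := by
  unfold thetaNode
  split_ifs with h₀ hl
  · subst h₀; exact (hu i).symm
  · subst hl; exact (hv i).symm
  · show P i (s - 1 + 1) ↔ P i s
    rw [Nat.sub_add_cancel (Nat.pos_of_ne_zero h₀)]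

theorem vertexPred_iff_of_reach {P : Fin N → ℕ → Prop} {pu pv : Prop}
    (hu : ∀ i, P i 0 ↔ pu) (hv : ∀ i, P i (ℓ i) ↔ pv)
    (hS : ∀ e ∈ S, P e.1 e.2 ↔ P e.1 (e.2 + 1)) {x y : (theta N ℓ).V}
    (h : (theta N ℓ).Reach S x y) : vertexPred P pu pv x ↔ vertexPred P pu pv y := by
  refine h.iff_of_forall_edge _ fun e he x y hxy => ?_
  have key : vertexPred P pu pv (thetaNode N ℓ e.1 e.2 e.2.isLt.le) ↔
      vertexPred P pu pv (thetaNode N ℓ e.1 (e.2 + 1) e.2.isLt) := by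
    rw [vertexPred_thetaNode hu hv, vertexPred_thetaNode hu hv]
    exact hS e he
  rcases Sym2.eq_iff.mp ((ends_eq e).symm.trans hxy) with ⟨rfl, rfl⟩ | ⟨rfl, rfl⟩
  · exact key
  · exact key.symm

/-- Removing the edge `g i` from every path `i` separates the positions up to the gaps from the
positions beyond them. -/
theorem le_gap_iff_of_reach (g : Fin N → ℕ) (hg : ∀ i, g i < ℓ i)
    (hS : ∀ e ∈ S, (e.2 : ℕ) ≠ g e.1) {x y : (theta N ℓ).V} (h : (theta N ℓ).Reach S x y) :
    vertexPred (fun i s => s ≤ g i) True False x ↔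
      vertexPred (fun i s => s ≤ g i) True False y :=
  vertexPred_iff_of_reach (P := fun i s => s ≤ g i)
    (fun _ => iff_true_intro (Nat.zero_le _))
    (fun i => iff_false_intro (hg i).not_ge) (fun e he => by have := hS e he; omega) h

theorem not_reach_of_gaps (g : Fin N → ℕ) (hg : ∀ i, g i < ℓ i)
    (hS : ∀ e ∈ S, (e.2 : ℕ) ≠ g e.1) :
    ¬ (theta N ℓ).Reach S (Sum.inl false) (Sum.inl true) :=
  fun h => (le_gap_iff_of_reach g hg hS h).1 trivial

theorem le_gap_iff_of_reach_thetaNode (g : Fin N → ℕ) (hg : ∀ i, g i < ℓ i)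
    (hS : ∀ e ∈ S, (e.2 : ℕ) ≠ g e.1) {i : Fin N} {s t : ℕ} (hs : s ≤ ℓ i) (ht : t ≤ ℓ i)
    (h : (theta N ℓ).Reach S (thetaNode N ℓ i s hs) (thetaNode N ℓ i t ht)) :
    s ≤ g i ↔ t ≤ g i := by
  have hu : ∀ i, (0 ≤ g i) ↔ True := fun _ => iff_true_intro (Nat.zero_le _)
  have hv : ∀ i, (ℓ i ≤ g i) ↔ False := fun i => iff_false_intro (hg i).not_ge
  have := le_gap_iff_of_reach g hg hS h
  rwa [vertexPred_thetaNode (P := fun i s => s ≤ g i) hu hv,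
    vertexPred_thetaNode (P := fun i s => s ≤ g i) hu hv] at this

theorem mem_Ioc_iff_of_reach_thetaNode {i : Fin N} {t₁ t₂ : ℕ} (h₁₂ : t₁ < t₂) (h₂ : t₂ < ℓ i)
    (hS : ∀ e ∈ S, e.1 = i → (e.2 : ℕ) ≠ t₁ ∧ (e.2 : ℕ) ≠ t₂) {s t : ℕ} (hs : s ≤ ℓ i)
    (ht : t ≤ ℓ i) (h : (theta N ℓ).Reach S (thetaNode N ℓ i s hs) (thetaNode N ℓ i t ht)) :
    s ∈ Set.Ioc t₁ t₂ ↔ t ∈ Set.Ioc t₁ t₂ := by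
  set P : Fin N → ℕ → Prop := fun k s => k = i ∧ t₁ < s ∧ s ≤ t₂
  have hu : ∀ k, P k 0 ↔ False := fun k => iff_false_intro fun ⟨_, h, _⟩ => by omega
  have hv : ∀ k, P k (ℓ k) ↔ False := fun k => iff_false_intro fun ⟨hk, _, h⟩ => by
    subst hk; omega
  have hstep : ∀ e ∈ S, P e.1 e.2 ↔ P e.1 (e.2 + 1) := fun e he => by
    by_cases hei : e.1 = i
    · have := hS e he hei
      simp only [P, hei, true_and]
      omega
    · simp only [P, hei, false_and]
  have := vertexPred_iff_of_reach hu hv hstep h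
  rw [vertexPred_thetaNode hu hv, vertexPred_thetaNode hu hv] at this
  simpa [P] using this

end cuts

theorem isForest_of_not_reach {S : Finset (theta N ℓ).E}
    (h : ∀ e ∈ S, ¬ (theta N ℓ).Reach (↑S \ {e}) (thetaNode N ℓ e.1 e.2 e.2.isLt.le)
      (thetaNode N ℓ e.1 (e.2 + 1) e.2.isLt)) :
    (theta N ℓ).IsForest S := by
  intro e he x y hxy hr
  rcases Sym2.eq_iff.mp ((ends_eq e).symm.trans hxy) with ⟨rfl, rfl⟩ | ⟨rfl, rfl⟩
  · exact h e he hr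
  · exact h e he hr.symm

theorem mk_mem_diff_singleton_iff {S : Set (theta N ℓ).E} {i k : Fin N} {t : Fin (ℓ k)}
    {j : Fin (ℓ i)} :
    (⟨k, t⟩ : (theta N ℓ).E) ∈ S \ {⟨i, j⟩} ↔ ⟨k, t⟩ ∈ S ∧ (k = i → (t : ℕ) ≠ j) := by
  refine and_congr_right fun _ => ⟨fun hne hki => ?_, fun hne heq => ?_⟩
  · subst hki
    exact fun htj => hne (congrArg _ (Fin.ext htj))
  · cases heq
    exact hne rfl rfl

def treeSet (i₀ : Fin N) (g : ∀ j : {j // j ≠ i₀}, Fin (ℓ j)) : Finset (theta N ℓ).E :=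
  Finset.univ.filter fun e => ∀ h : e.1 ≠ i₀, e.2 ≠ g ⟨e.1, h⟩

variable {i₀ : Fin N} {g : ∀ j : {j // j ≠ i₀}, Fin (ℓ j)}

theorem mk_mem_treeSet {i : Fin N} {t : Fin (ℓ i)} :
    (⟨i, t⟩ : (theta N ℓ).E) ∈ treeSet i₀ g ↔ ∀ h : i ≠ i₀, (t : ℕ) ≠ g ⟨i, h⟩ := by
  refine Finset.mem_filter.trans ((and_iff_right (Finset.mem_univ _)).trans ?_)
  simp only [ne_eq, Fin.val_inj]

theorem reach_treeSet (hl : ∀ i, 0 < ℓ i) (x : (theta N ℓ).V) :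
    (theta N ℓ).Reach ↑(treeSet i₀ g) x (Sum.inl false) := by
  have hvu : (theta N ℓ).Reach ↑(treeSet i₀ g) (Sum.inl true) (Sum.inl false) :=
    (reach_of_forall_mem (hl i₀) fun _ => mk_mem_treeSet.2 fun h => absurd rfl h).symm
  rcases x with (_ | _) | ⟨i, t⟩
  · exact Relation.ReflTransGen.refl
  · exact hvu
  have ht : t.1 + 1 < ℓ i := by omega
  have hx : Sum.inr ⟨i, t⟩ = thetaNode N ℓ i (t + 1) ht.le := by
    rw [thetaNode_of_pos_of_lt i t.1.succ_pos ht]; rfl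
  rw [hx]
  by_cases hup : ∃ h : i ≠ i₀, (g ⟨i, h⟩ : ℕ) ≤ t
  · obtain ⟨hi, hgt⟩ := hup
    have h := reach_thetaNode_of_forall_mem (S := ↑(treeSet i₀ g)) ht.le le_rfl
      fun j hj hj' _ => mk_mem_treeSet.2 fun _ => by simp only; omega
    rw [thetaNode_length i (hl i)] at h
    exact h.trans hvu
  · push Not at hup
    have h := reach_thetaNode_of_forall_mem (S := ↑(treeSet i₀ g)) (Nat.zero_le _) ht.le
      fun j hj _ hj' => mk_mem_treeSet.2 fun h => by have := hup h; simp only; omega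
    exact h.symm

theorem isSpanningTree_treeSet (hl : ∀ i, 0 < ℓ i) :
    (theta N ℓ).IsSpanningTree (treeSet i₀ g) := by
  refine ⟨isForest_of_not_reach ?_, fun x y => (reach_treeSet hl x).trans (reach_treeSet hl y).symm⟩
  rintro ⟨i, j⟩ he hr
  have hS : ∀ k (t : Fin (ℓ k)),
      (⟨k, t⟩ : (theta N ℓ).E) ∈ (↑(treeSet i₀ g) : Set (theta N ℓ).E) \ {⟨i, j⟩} →
      (∀ h : k ≠ i₀, (t : ℕ) ≠ g ⟨k, h⟩) ∧ (k = i → (t : ℕ) ≠ j) := fun k t hkt =>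
    have hkt := mk_mem_diff_singleton_iff.1 hkt
    ⟨mk_mem_treeSet.1 hkt.1, hkt.2⟩
  by_cases hi : i = i₀
  · subst hi
    -- every path now has a gap, and the gap on path `i` lies between the ends of the edge
    refine absurd (le_gap_iff_of_reach_thetaNode (fun k => if h : k = i then j else g ⟨k, h⟩)
      (fun k => ?_) (fun e he => ?_) _ _ hr) (by simp)
    · split_ifs with hk
      · subst hk; exact j.isLt
      · exact (g _).isLt
    · obtain ⟨k, t⟩ := e
      obtain ⟨hg, hj⟩ := hS k t he
      split_ifs with hk
      · exact hj hk
      · exact hg hk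
  · have hj : (j : ℕ) ≠ g ⟨i, hi⟩ := mk_mem_treeSet.1 he hi
    have hgi : (g ⟨i, hi⟩ : ℕ) < ℓ i := (g ⟨i, hi⟩).isLt
    have := mem_Ioc_iff_of_reach_thetaNode (i := i) (t₁ := min j (g ⟨i, hi⟩))
      (t₂ := max j (g ⟨i, hi⟩)) (by omega) (by omega) (fun e he hk => by
        obtain ⟨k, t⟩ := e
        subst hk
        obtain ⟨hg, hj⟩ := hS _ t he
        have := hg hi
        have := hj rfl
        dsimp only
        omega) _ _ hr
    simp only [Set.mem_Ioc] at this
    omega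

theorem treeSet_injective :
    Function.Injective fun c : Σ i₀ : Fin N, ∀ j : {j // j ≠ i₀}, Fin (ℓ j) => treeSet c.1 c.2 := by
  rintro ⟨i₀, g⟩ ⟨i₁, g'⟩ h
  simp only at h
  obtain rfl : i₀ = i₁ := by
    by_contra hne
    have : (⟨i₀, g' ⟨i₀, hne⟩⟩ : (theta N ℓ).E) ∈ treeSet i₁ g' :=
      h ▸ mk_mem_treeSet.2 fun h => absurd rfl h
    exact mk_mem_treeSet.1 this hne rfl
  refine congrArg _ (funext fun j => ?_)
  have : (⟨j, g j⟩ : (theta N ℓ).E) ∉ treeSet i₀ g' :=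
    h ▸ fun hm => mk_mem_treeSet.1 hm j.2 rfl
  by_contra hne
  exact this (mk_mem_treeSet.2 fun _ heq => hne (Fin.ext heq))

variable {S : Finset (theta N ℓ).E}

theorem exists_forall_mem_of_isSpanningTree (hT : (theta N ℓ).IsSpanningTree S) :
    ∃ i, ∀ t : Fin (ℓ i), (⟨i, t⟩ : (theta N ℓ).E) ∈ S := by
  by_contra! hgap
  choose g hg using hgap
  exact not_reach_of_gaps (fun i => g i) (fun i => (g i).isLt)
    (fun ⟨i, t⟩ he heq => hg i (Fin.ext heq ▸ he)) (hT.2 _ _)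

theorem eq_of_notMem_of_notMem (hT : (theta N ℓ).IsSpanningTree S) {i : Fin N}
    {t₁ t₂ : Fin (ℓ i)} (h₁ : (⟨i, t₁⟩ : (theta N ℓ).E) ∉ S)
    (h₂ : (⟨i, t₂⟩ : (theta N ℓ).E) ∉ S) : t₁ = t₂ := by
  suffices key : ∀ {t₁ t₂ : Fin (ℓ i)}, (⟨i, t₁⟩ : (theta N ℓ).E) ∉ S →
      (⟨i, t₂⟩ : (theta N ℓ).E) ∉ S → ¬ t₁ < t₂ from
    le_antisymm (not_lt.1 (key h₂ h₁)) (not_lt.1 (key h₁ h₂))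
  intro t₁ t₂ h₁ h₂ hlt
  have := mem_Ioc_iff_of_reach_thetaNode (S := ↑S) hlt t₂.isLt
    (fun e he hk => by
      obtain ⟨k, t⟩ := e
      subst hk
      exact ⟨fun heq => h₁ (Fin.ext heq ▸ he), fun heq => h₂ (Fin.ext heq ▸ he)⟩)
    (Nat.zero_le _) t₁.isLt (hT.2 _ _)
  simp only [Set.mem_Ioc] at this
  omega

theorem eq_of_forall_mem (hl : ∀ i, 0 < ℓ i) (hT : (theta N ℓ).IsSpanningTree S) {i i' : Fin N}
    (h : ∀ t, (⟨i, t⟩ : (theta N ℓ).E) ∈ S) (h' : ∀ t, (⟨i', t⟩ : (theta N ℓ).E) ∈ S) :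
    i = i' := by
  by_contra hne
  -- the two full paths form a cycle through the first edge of path `i`
  refine hT.1 ⟨i, ⟨0, hl i⟩⟩ (h _) _ _ rfl ?_
  have huv := reach_of_forall_mem (S := ↑S \ {⟨i, ⟨0, hl i⟩⟩}) (hl i')
    fun t => mk_mem_diff_singleton_iff.2 ⟨h' t, fun hi => absurd hi.symm hne⟩
  have h1v := reach_thetaNode_of_forall_mem (S := ↑S \ {⟨i, ⟨0, hl i⟩⟩}) (hl i) le_rfl
    fun j hj hj1 _ => mk_mem_diff_singleton_iff.2 ⟨h ⟨j, hj⟩, fun _ => by simp only; omega⟩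
  rw [thetaNode_length i (hl i)] at h1v
  exact huv.trans h1v.symm

theorem exists_treeSet_eq (hl : ∀ i, 0 < ℓ i) (hT : (theta N ℓ).IsSpanningTree S) :
    ∃ (i₀ : Fin N) (g : ∀ j : {j // j ≠ i₀}, Fin (ℓ j)), treeSet i₀ g = S := by
  obtain ⟨i₀, hfull⟩ := exists_forall_mem_of_isSpanningTree hT
  have hgap (j : {j // j ≠ i₀}) : ∃ t, (⟨j, t⟩ : (theta N ℓ).E) ∉ S := by
    by_contra! h
    exact j.2 (eq_of_forall_mem hl hT h hfull)
  choose g hg using hgap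
  refine ⟨i₀, g, Finset.ext fun ⟨i, t⟩ => mk_mem_treeSet.trans ⟨fun h => ?_, fun h hi heq => ?_⟩⟩
  · by_cases hi : i = i₀
    · subst hi
      exact hfull t
    · by_contra hnot
      exact h hi (congrArg Fin.val (eq_of_notMem_of_notMem hT hnot (hg ⟨i, hi⟩)))
  · exact hg ⟨i, hi⟩ (Fin.ext heq ▸ h)

end theta

theorem treeCount_theta {N : ℕ} {ℓ : Fin N → ℕ} (hl : ∀ i, 0 < ℓ i) :
    (theta N ℓ).treeCount = ∑ i, ∏ j : {j // j ≠ i}, ℓ j.1 := by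
  let e := Equiv.ofBijective
    (fun c : Σ i₀ : Fin N, ∀ j : {j // j ≠ i₀}, Fin (ℓ j) =>
      (⟨theta.treeSet c.1 c.2, theta.isSpanningTree_treeSet hl⟩ :
        {S // (theta N ℓ).IsSpanningTree S}))
    ⟨fun _ _ h => theta.treeSet_injective (congrArg Subtype.val h),
      fun ⟨_, hT⟩ => have ⟨i₀, g, h⟩ := theta.exists_treeSet_eq hl hT; ⟨⟨i₀, g⟩, Subtype.ext h⟩⟩
  rw [Multigraph.treeCount, ← Nat.card_congr e, Nat.card_eq_fintype_card, Fintype.card_sigma]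
  simp only [Fintype.card_pi, Fintype.card_fin]

theorem treeCount_doubleTheta {a b : ℕ} (ha : 0 < a) (hb : 0 < b) (m : ℕ) :
    (doubleTheta a b m).treeCount = (a + b) * m * (a * b) ^ (m - 1) := by
  rw [doubleTheta]
  set ℓ : Fin (m + m) → ℕ := fun i => if i.1 < m then a else b
  rw [treeCount_theta fun i => by dsimp only [ℓ]; split_ifs <;> assumption]
  have hprod (i : Fin (m + m)) : ℓ i * ∏ j : {j // j ≠ i}, ℓ j.1 = a ^ m * b ^ m := by
    rw [← Fintype.prod_eq_mul_prod_subtype_ne, Fin.prod_univ_add]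
    simp [ℓ]
  cases m with
  | zero => simp
  | succ k =>
    have hA (i : Fin (k + 1)) :
        ∏ j : {j // j ≠ Fin.castAdd (k + 1) i}, ℓ j.1 = a ^ k * b ^ (k + 1) := by
      have hℓ : ℓ (Fin.castAdd (k + 1) i) = a := if_pos i.isLt
      refine Nat.eq_of_mul_eq_mul_left ha ?_
      conv_lhs => rw [← hℓ, hprod]
      ring
    have hB (i : Fin (k + 1)) :
        ∏ j : {j // j ≠ Fin.natAdd (k + 1) i}, ℓ j.1 = a ^ (k + 1) * b ^ k := by
      have hℓ : ℓ (Fin.natAdd (k + 1) i) = b := if_neg (by rw [Fin.val_natAdd]; omega)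
      refine Nat.eq_of_mul_eq_mul_left hb ?_
      conv_lhs => rw [← hℓ, hprod]
      ring
    rw [Fin.sum_univ_add]
    simp only [hA, hB, Finset.sum_const, Finset.card_univ, Fintype.card_fin, smul_eq_mul,
      Nat.add_sub_cancel]
    ring

/-- For `a, b ≥ 1`: the multigraph `Y` consisting of two vertices joined by `m ≥ 1`
internally disjoint paths of length `a` and `m` of length `b` has exactly
`(a + b) · m · (ab)^{m-1}` spanning trees; in particular, the `n`-th layer of the
degree-`p^n` branched cyclic cover of a cycle of length `a + b`, totally ramified at the
two distinguished vertices with trivial voltage assignment (which is `Y` with `m = p^n`),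
has `(a + b) · p^n · (ab)^{p^n - 1}` spanning trees. -/
theorem stmt_12 (a b : ℕ) (ha : 1 ≤ a) (hb : 1 ≤ b) :
    (∀ m : ℕ, 1 ≤ m → (doubleTheta a b m).treeCount = (a + b) * m * (a * b) ^ (m - 1)) ∧
    (∀ p n : ℕ, p.Prime →
      (doubleTheta a b (p ^ n)).treeCount = (a + b) * p ^ n * (a * b) ^ (p ^ n - 1)) :=
  ⟨fun m _ => treeCount_doubleTheta ha hb m, fun p n _ => treeCount_doubleTheta ha hb (p ^ n)⟩
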